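/- arXiv:2406.13014 — 9 statements merged into one kernel-verified Lean document; each statement's English description precedes it below -/
import Mathlib

section
/- Let f be a function analytic in a neighborhood of 0 in ℂ with f(0) = 0, such that f maps points of the upper half-plane (sufficiently close to 0) into the closed upper half-plane. If f is not identically zero, then f'(0) > 0. -/
/-!
Write `f z = z ^ n • g z` near `0` with `g 0 = c ≠ 0` and `n ≥ 1`. Blowing up along the rays
`t ↦ t w` (`t → 0⁺`) turns the hypothesis into `0 ≤ Im (c w ^ n)` on the whole upper half-plane.
For `n ≥ 2` the arguments of `w ^ n` sweep an interval of length at least `2π`, so `Im (c u)` would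
have to be both `≥ 0` and `≤ 0` on a half-circle of `u`, forcing `c = 0`. Hence `n = 1`, and
`Im (c w) ≥ 0` for all `w` with `Im w > 0` means exactly that `c = f'(0)` is a positive real.
-/

open Complex Filter Topology
open scoped Real

lemma eventually_im_nonneg_of_forall_norm_lt {f : ℂ → ℂ}
    (h : ∃ ε > 0, ∀ z : ℂ, ‖z‖ < ε → 0 < z.im → 0 ≤ (f z).im) :
    ∀ᶠ z in 𝓝[{z | 0 < z.im}] 0, 0 ≤ (f z).im := by
  obtain ⟨ε, hε, hf⟩ := h
  rw [eventually_nhdsWithin_iff, Metric.eventually_nhds_iff]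
  exact ⟨ε, hε, fun z hz hz' => hf z (by simpa using hz) hz'⟩

lemma tendsto_ofReal_mul_nhdsWithin_im_pos {w : ℂ} (hw : 0 < w.im) :
    Tendsto (fun t : ℝ => (t : ℂ) * w) (𝓝[>] 0) (𝓝[{z | 0 < z.im}] 0) := by
  refine tendsto_nhdsWithin_iff.mpr ⟨?_, ?_⟩
  · exact ((continuous_ofReal.mul continuous_const).tendsto' 0 0 (by simp)).mono_left
      nhdsWithin_le_nhds
  · filter_upwards [self_mem_nhdsWithin] with t (ht : 0 < t)
    simpa using mul_pos ht hw

lemma im_mul_pow_nonneg_of_eventuallyEq_pow_smul {f g : ℂ → ℂ} {n : ℕ}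
    (hg : ContinuousAt g 0) (hfg : ∀ᶠ z in 𝓝 0, f z = z ^ n • g z)
    (hf : ∀ᶠ z in 𝓝[{z | 0 < z.im}] 0, 0 ≤ (f z).im) {w : ℂ} (hw : 0 < w.im) :
    0 ≤ (g 0 * w ^ n).im := by
  have hray := tendsto_ofReal_mul_nhdsWithin_im_pos hw
  have hray' := hray.mono_right nhdsWithin_le_nhds
  have hlim : Tendsto (fun t : ℝ => (g (t * w) * w ^ n).im) (𝓝[>] 0) (𝓝 (g 0 * w ^ n).im) :=
    (continuous_im.tendsto _).comp ((hg.tendsto.comp hray').mul_const _)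
  refine ge_of_tendsto hlim ?_
  filter_upwards [hray.eventually hf, hray'.eventually hfg, self_mem_nhdsWithin]
    with t hft hfgt (ht : 0 < t)
  have hscale : (f (t * w)).im = t ^ n * (g (t * w) * w ^ n).im := by
    rw [hfgt, smul_eq_mul, mul_pow, ← ofReal_pow, mul_assoc, mul_comm (w ^ n), im_ofReal_mul]
  rw [hscale] at hft
  exact (mul_nonneg_iff_of_pos_left (pow_pos ht n)).mp hft

lemma re_mul_sin_add_im_mul_cos_nonneg {c : ℂ} {n : ℕ}
    (hc : ∀ w : ℂ, 0 < w.im → 0 ≤ (c * w ^ n).im) {x : ℝ} (hx₀ : 0 < x) (hx : x < n * π) :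
    0 ≤ c.re * Real.sin x + c.im * Real.cos x := by
  have hn : (0 : ℝ) < n := pos_of_mul_pos_left (hx₀.trans hx) Real.pi_pos.le
  have hw : 0 < (exp ((x / n : ℝ) * I)).im := by
    rw [exp_ofReal_mul_I_im]
    exact Real.sin_pos_of_pos_of_lt_pi (by positivity) (by rw [div_lt_iff₀ hn]; linarith)
  have hpow : exp ((x / n : ℝ) * I) ^ n = exp (x * I) := by
    have hn' : (n : ℂ) ≠ 0 := by exact_mod_cast hn.ne'
    rw [← exp_nat_mul]
    congr 1
    push_cast
    field_simp
  have h := hc _ hw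
  rw [hpow] at h
  simpa [mul_im, exp_ofReal_mul_I_re, exp_ofReal_mul_I_im] using h

lemma eq_zero_of_forall_im_mul_pow_nonneg {c : ℂ} {n : ℕ} (hn : 2 ≤ n)
    (hc : ∀ w : ℂ, 0 < w.im → 0 ≤ (c * w ^ n).im) : c = 0 := by
  -- `x` and `x + π` both lie in `(0, n π)`, and the expression changes sign under `x ↦ x + π`.
  have hvanish : ∀ x, 0 < x → x < π → c.re * Real.sin x + c.im * Real.cos x = 0 := by
    intro x hx₀ hx
    have h2n : 2 * π ≤ n * π := by gcongr; exact_mod_cast hn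
    have h₁ := re_mul_sin_add_im_mul_cos_nonneg hc hx₀ (by linarith)
    have h₂ := re_mul_sin_add_im_mul_cos_nonneg hc (x := x + π) (by linarith) (by linarith)
    rw [Real.sin_add_pi, Real.cos_add_pi] at h₂
    linarith
  have hre := hvanish (π / 2) (by positivity) (by linarith [Real.pi_pos])
  have him := hvanish (π / 3) (by positivity) (by linarith [Real.pi_pos])
  rw [Real.sin_pi_div_two, Real.cos_pi_div_two, mul_one, mul_zero, add_zero] at hre
  rw [hre, Real.cos_pi_div_three, zero_mul, zero_add] at him
  exact Complex.ext hre (by simpa using him)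

lemma im_eq_zero_and_re_pos_of_forall_im_mul_nonneg {c : ℂ} (hc₀ : c ≠ 0)
    (hc : ∀ w : ℂ, 0 < w.im → 0 ≤ (c * w).im) : c.im = 0 ∧ 0 < c.re := by
  have hline : ∀ x : ℝ, 0 ≤ c.re + c.im * x := fun x => by
    simpa [mul_im, add_comm] using hc (x + I) (by simp)
  have him : c.im = 0 := by
    by_contra h
    have := hline (-(c.re + 1) / c.im)
    rw [mul_div_cancel₀ _ h] at this
    linarith
  refine ⟨him, (by simpa using hline 0 : 0 ≤ c.re).lt_of_ne fun hre => hc₀ ?_⟩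
  exact Complex.ext hre.symm him

lemma deriv_eq_of_eventuallyEq_smul {𝕜 E : Type*} [NontriviallyNormedField 𝕜]
    [NormedAddCommGroup E] [NormedSpace 𝕜 E] {f g : 𝕜 → E} (hg : DifferentiableAt 𝕜 g 0)
    (hfg : ∀ᶠ z in 𝓝 0, f z = z • g z) : deriv f 0 = g 0 := by
  rw [EventuallyEq.deriv_eq hfg]
  have h : HasDerivAt (fun z => z • g z) ((0 : 𝕜) • deriv g 0 + (1 : 𝕜) • g 0) 0 :=
    (hasDerivAt_id' 0).smul hg.hasDerivAt
  simpa using h.deriv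

/-- If `f` is analytic at `0`, `f 0 = 0`, and `f` maps points of the upper
half-plane near `0` into the closed upper half-plane, then either `f` vanishes
identically near `0` or `f'(0)` is a positive real number. -/
theorem stmt_0 (f : ℂ → ℂ) (hf : AnalyticAt ℂ f 0) (h0 : f 0 = 0)
    (hmap : ∃ ε > 0, ∀ z : ℂ, ‖z‖ < ε → 0 < z.im → 0 ≤ (f z).im)
    (hnz : ¬ (∀ᶠ z in nhds (0 : ℂ), f z = 0)) :
    (deriv f 0).im = 0 ∧ 0 < (deriv f 0).re := by
  obtain ⟨n, g, hg, hg₀, hfg⟩ := hf.exists_eventuallyEq_pow_smul_nonzero_iff.mpr hnz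
  simp only [sub_zero] at hfg
  have hn : n ≠ 0 := by
    rintro rfl
    exact hg₀ (by simpa [h0] using hfg.self_of_nhds.symm)
  have hc : ∀ w : ℂ, 0 < w.im → 0 ≤ (g 0 * w ^ n).im := fun _ =>
    im_mul_pow_nonneg_of_eventuallyEq_pow_smul hg.continuousAt hfg
      (eventually_im_nonneg_of_forall_norm_lt hmap)
  obtain rfl : n = 1 := by
    by_contra hn₁
    exact hg₀ (eq_zero_of_forall_im_mul_pow_nonneg (by omega) hc)
  simp only [pow_one] at hfg hc
  rw [deriv_eq_of_eventuallyEq_smul hg.differentiableAt hfg]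
  exact im_eq_zero_and_re_pos_of_forall_im_mul_nonneg hg₀ hc
end

section
/- Let φ be analytic near 0 in ℂ^d with φ(0) = 0, and suppose z + φ(x) ≠ 0 whenever Im z > 0 and x lies in a small polydisk neighborhood of 0 with all Im x_j > 0. Then every component of ∇φ(0) is a nonnegative real number, and Im φ(x) ≥ 0 for all real x sufficiently close to 0. -/
/-!
If `Im φ(x) < 0` at a small `x` with all `Im x_j > 0`, then `z = -φ(x)` violates the stability
hypothesis; hence `Im φ ≥ 0` on the open upper octant near `0`. Letting `x` approach a point of
the closed octant along `x + i t (1, …, 1)`, `t ↓ 0`, gives `Im φ ≥ 0` at real points near `0`.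
Differentiating along rays gives `Im (Dφ(0) v) ≥ 0` on the open octant, hence on the closed one,
and `v = e_j, -e_j, i e_j` give `Im ∂_jφ(0) = 0` and `Re ∂_jφ(0) ≥ 0`.
-/

open Complex Filter Topology Set

theorem HasFDerivAt.nonneg_apply_of_eventually_nonneg_smul {E : Type*}
    [NormedAddCommGroup E] [NormedSpace ℝ E] {g : E → ℝ} {g' : E →L[ℝ] ℝ}
    (hg : HasFDerivAt g g' 0) (h0 : g 0 = 0) {v : E}
    (hv : ∀ᶠ t in 𝓝[>] (0 : ℝ), 0 ≤ g (t • v)) : 0 ≤ g' v := by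
  have hline : HasDerivAt (fun t : ℝ => g (t • v)) (g' v) 0 := by
    have hsmul : HasDerivAt (fun t : ℝ => t • v) v 0 := by
      simpa using (hasDerivAt_id (0 : ℝ)).smul_const v
    exact hg.comp_hasDerivAt_of_eq 0 hsmul (zero_smul ℝ v).symm
  have hslope := (hasDerivWithinAt_iff_tendsto_slope' (s := Ioi (0 : ℝ)) self_notMem_Ioi).1
    hline.hasDerivWithinAt
  refine ge_of_tendsto hslope ?_
  filter_upwards [hv, self_mem_nhdsWithin] with t ht htpos
  rw [slope_def_field, zero_smul, h0, sub_zero, sub_zero]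
  exact div_nonneg ht (le_of_lt htpos)

theorem tendsto_add_smul_nhdsGT {E : Type*} [NormedAddCommGroup E] [NormedSpace ℝ E]
    (x w : E) : Tendsto (fun t : ℝ => x + t • w) (𝓝[>] 0) (𝓝 x) := by
  have h : Continuous fun t : ℝ => x + t • w := by fun_prop
  simpa using (h.tendsto 0).mono_left nhdsWithin_le_nhds

section Octant

variable {ι : Type*} [Fintype ι]

theorem eventually_im_nonneg_of_add_ne_zero {φ : (ι → ℂ) → ℂ} (hφ : ContinuousAt φ 0)
    (h0 : φ 0 = 0) {ε : ℝ} (hε : 0 < ε)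
    (hstable : ∀ (x : ι → ℂ) (z : ℂ), (∀ j, 0 < (x j).im) → (∀ j, ‖x j‖ < ε) →
      0 < z.im → ‖z‖ < ε → z + φ x ≠ 0) :
    ∀ᶠ x in 𝓝 0, (∀ j, 0 < (x j).im) → 0 ≤ (φ x).im := by
  have hφε : ∀ᶠ x in 𝓝 0, φ x ∈ Metric.ball 0 ε :=
    (h0 ▸ hφ.tendsto).eventually (Metric.ball_mem_nhds 0 hε)
  filter_upwards [hφε, Metric.ball_mem_nhds 0 hε] with x hφx hx him
  by_contra! hneg
  refine hstable x (-φ x) him (fun j => ?_) (by simpa using hneg) (by simpa using hφx)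
    (neg_add_cancel _)
  exact (norm_le_pi_norm x j).trans_lt (by simpa using hx)

theorem im_nonneg_of_eventually_im_nonneg {f : (ι → ℂ) → ℂ} {x : ι → ℂ}
    (hf : ContinuousAt f x)
    (hpos : ∀ᶠ y in 𝓝 x, (∀ j, 0 < (y j).im) → 0 ≤ (f y).im)
    (hx : ∀ j, 0 ≤ (x j).im) : 0 ≤ (f x).im := by
  have hpath := tendsto_add_smul_nhdsGT x (fun _ => I)
  refine ge_of_tendsto ((continuous_im.tendsto _).comp (hf.tendsto.comp hpath)) ?_
  filter_upwards [hpath.eventually hpos, self_mem_nhdsWithin] with t ht htpos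
  exact ht fun j => by simpa using add_pos_of_nonneg_of_pos (hx j) htpos

theorem im_fderiv_nonneg_of_eventually_im_nonneg {φ : (ι → ℂ) → ℂ}
    {L : (ι → ℂ) →L[ℂ] ℂ} (hL : HasFDerivAt φ L 0) (h0 : φ 0 = 0)
    (hpos : ∀ᶠ x in 𝓝 0, (∀ j, 0 < (x j).im) → 0 ≤ (φ x).im)
    {v : ι → ℂ} (hv : ∀ j, 0 ≤ (v j).im) : 0 ≤ (L v).im := by
  refine im_nonneg_of_eventually_im_nonneg L.continuous.continuousAt
    (Eventually.of_forall fun w hw => ?_) hv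
  have him : HasFDerivAt (fun x => (φ x).im) (imCLM.comp (L.restrictScalars ℝ)) 0 :=
    imCLM.hasFDerivAt.comp 0 (hL.restrictScalars ℝ)
  refine him.nonneg_apply_of_eventually_nonneg_smul (by simp [h0]) ?_
  have hray : Tendsto (fun t : ℝ => t • w) (𝓝[>] 0) (𝓝 0) := by
    simpa using tendsto_add_smul_nhdsGT 0 w
  filter_upwards [hray.eventually hpos, self_mem_nhdsWithin] with t ht htpos
  exact ht fun j => by simpa using mul_pos htpos (hw j)

end Octant

/-- If `φ` is analytic at `0 ∈ ℂ^d`, `φ 0 = 0`, and `z + φ x ≠ 0` whenever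
`Im z > 0` and `x` lies in a small polydisk with all `Im x_j > 0`, then every
component of `∇φ(0)` is a nonnegative real number and `Im φ(x) ≥ 0` for real
`x` near `0`. -/
theorem stmt_1 (d : ℕ) (φ : (Fin d → ℂ) → ℂ) (hφ : AnalyticAt ℂ φ 0)
    (h0 : φ 0 = 0)
    (hstable : ∃ ε > 0, ∀ (x : Fin d → ℂ) (z : ℂ),
      (∀ j, 0 < (x j).im) → (∀ j, ‖x j‖ < ε) → 0 < z.im → ‖z‖ < ε →
        z + φ x ≠ 0) :
    (∀ j : Fin d, (fderiv ℂ φ 0 (Pi.single j 1)).im = 0 ∧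
        0 ≤ (fderiv ℂ φ 0 (Pi.single j 1)).re) ∧
    (∃ ε > 0, ∀ x : Fin d → ℝ, (∀ j, |x j| < ε) →
        0 ≤ (φ (fun j => (x j : ℂ))).im) := by
  obtain ⟨ε, hε, hst⟩ := hstable
  have hpos := eventually_im_nonneg_of_add_ne_zero hφ.continuousAt h0 hε hst
  constructor
  · intro j
    have hL := hφ.differentiableAt.hasFDerivAt
    have hdir : ∀ v : Fin d → ℂ, (∀ k, 0 ≤ (v k).im) → 0 ≤ (fderiv ℂ φ 0 v).im :=
      fun _ => im_fderiv_nonneg_of_eventually_im_nonneg hL h0 hpos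
    have h₁ := hdir (Pi.single j 1) fun k => by by_cases hk : k = j <;> simp [hk]
    have h₂ := hdir (-Pi.single j 1) fun k => by by_cases hk : k = j <;> simp [hk]
    have h₃ := hdir (I • Pi.single j 1) fun k => by by_cases hk : k = j <;> simp [hk]
    simp only [map_neg, neg_im, map_smul, smul_eq_mul, mul_im, I_re, I_im] at h₂ h₃
    exact ⟨by linarith, by linarith⟩
  · obtain ⟨δ, hδ, hball⟩ := Metric.eventually_nhds_iff.1
      (hφ.eventually_analyticAt.and hpos.eventually_nhds)
    refine ⟨δ, hδ, fun x hx => ?_⟩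
    have hxδ : dist (fun j => (x j : ℂ)) 0 < δ := by
      simpa [dist_zero_right, pi_norm_lt_iff hδ] using hx
    obtain ⟨hana, hnear⟩ := hball hxδ
    exact im_nonneg_of_eventually_im_nonneg hana.continuousAt hnear (fun j => by simp)
end

section
/- Let φ be analytic near 0 in ℂ^d with φ(0) = 0 and Im φ(x) ≥ 0 for all real x near 0. Write φ = Σ_j φ_j as a sum of homogeneous polynomials of degree j. If M is the smallest index such that φ_M does not have all real coefficients, then M is even and Im φ_M is a nonnegative function on ℝ^d. -/
/-!
Fix a real point `x` and restrict to the line `t ↦ t • x`. By homogeneity,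
`Im φ (t • x) = ∑ j, Im φ_j(x) t ^ j` is a real power series, nonnegative near `0`,
whose coefficients below `M` vanish, so `Im φ (t • x) / t ^ M → Im φ_M(x)` as `t → 0`.
Letting `t → 0⁺` gives `Im φ_M(x) ≥ 0`; if `M` is odd, `t ^ M < 0` for `t < 0`, and
`t → 0⁻` gives `Im φ_M(x) ≤ 0`. Then the real polynomial with coefficients
`Im (coeff φ_M)` vanishes on `ℝ^d`, hence is zero, contradicting the choice of `M`.
-/

open Complex MvPolynomial
open Filter Topology Asymptotics FormalMultilinearSeries
open scoped NNReal ENNReal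

namespace MvPolynomial

variable {σ : Type*}

theorem IsHomogeneous.eval_smul {R : Type*} [CommSemiring R] {q : MvPolynomial σ R} {n : ℕ}
    (hq : q.IsHomogeneous n) (c : R) (x : σ → R) :
    eval (c • x) q = c ^ n * eval x q := by
  rw [eval_eq, eval_eq, Finset.mul_sum]
  refine Finset.sum_congr rfl fun m hm => ?_
  have hdeg : ∑ i ∈ m.support, m i = n := by
    rw [← hq (mem_support_iff.1 hm), Finsupp.weight_apply, Finsupp.sum]
    simp
  simp only [Pi.smul_apply, smul_eq_mul, mul_pow, Finset.prod_mul_distrib,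
    Finset.prod_pow_eq_pow_sum, hdeg]
  ring

noncomputable def imPart (q : MvPolynomial σ ℂ) : MvPolynomial σ ℝ :=
  ∑ m ∈ q.support, monomial m (q.coeff m).im

theorem coeff_imPart (q : MvPolynomial σ ℂ) (m : σ →₀ ℕ) :
    (imPart q).coeff m = (q.coeff m).im := by
  classical
  rw [imPart, coeff_sum, Finset.sum_eq_single m]
  · rw [coeff_monomial, if_pos rfl]
  · intro m' _ hm'
    rw [coeff_monomial, if_neg hm']
  · intro hm
    rw [notMem_support_iff.1 hm]
    simp

theorem eval_imPart (q : MvPolynomial σ ℂ) (x : σ → ℝ) :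
    eval x (imPart q) = (eval (fun i => (x i : ℂ)) q).im := by
  rw [imPart, map_sum, eval_eq, im_sum]
  refine Finset.sum_congr rfl fun m _ => ?_
  rw [eval_monomial, Finsupp.prod, ← im_mul_ofReal]
  push_cast
  rfl

theorem imPart_eq_zero {q : MvPolynomial σ ℂ} (hq : ∀ m, (q.coeff m).im = 0) : imPart q = 0 :=
  ext _ _ fun m => by rw [coeff_imPart, hq, coeff_zero]

theorem IsHomogeneous.im_eval_ofReal_smul {q : MvPolynomial σ ℂ} {n : ℕ}
    (hq : q.IsHomogeneous n) (t : ℝ) (x : σ → ℝ) :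
    (eval (fun i => ((t • x) i : ℂ)) q).im = (eval (fun i => (x i : ℂ)) q).im * t ^ n := by
  have : (fun i => ((t • x) i : ℂ)) = (t : ℂ) • fun i => (x i : ℂ) := by
    ext i; simp
  rw [this, hq.eval_smul, ← ofReal_pow, im_ofReal_mul, mul_comm]

end MvPolynomial

theorem hasFPowerSeriesAt_ofScalars_of_hasSum {a : ℕ → ℝ} {g : ℝ → ℝ}
    (hg : ∀ᶠ t in 𝓝 0, HasSum (fun j => a j * t ^ j) (g t)) :
    HasFPowerSeriesAt g (ofScalars ℝ a) 0 := by
  obtain ⟨r, hr, hball⟩ := Metric.eventually_nhds_iff.1 hg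
  set ρ : ℝ≥0 := ⟨r / 2, by positivity⟩
  have hρ : ∀ {t : ℝ}, t ∈ Metric.eball (0 : ℝ) ρ →
      HasSum (fun j => a j * t ^ j) (g t) := by
    intro t ht
    rw [Metric.eball_coe, Metric.mem_ball] at ht
    exact hball (ht.trans (half_lt_self hr))
  have hρ_le : (ρ : ℝ≥0∞) ≤ (ofScalars ℝ a).radius := by
    refine le_radius_of_tendsto _ (l := 0) (?_ : Tendsto (fun n => _ * (r / 2) ^ n) _ _)
    have := (hball (y := r / 2) (by simpa [abs_of_pos hr] using half_lt_self hr)).summable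
      |>.tendsto_atTop_zero.norm
    simpa [ofScalars_norm, norm_mul, norm_pow, abs_of_pos hr] using this
  refine ⟨ρ, hρ_le, ENNReal.coe_pos.2 (NNReal.coe_pos.1 (half_pos hr)),
    fun hy => ?_⟩
  simpa [ofScalars_apply_eq, mul_comm] using hρ hy

theorem tendsto_div_pow_of_hasSum {a : ℕ → ℝ} {g : ℝ → ℝ} {M : ℕ} (ha : ∀ j < M, a j = 0)
    (hg : ∀ᶠ t in 𝓝 0, HasSum (fun j => a j * t ^ j) (g t)) :
    Tendsto (fun t => g t / t ^ M) (𝓝[≠] 0) (𝓝 (a M)) := by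
  have hpartial : ∀ t, (ofScalars ℝ a).partialSum (M + 1) t = a M * t ^ M := by
    intro t
    rw [partialSum, Finset.sum_range_succ, Finset.sum_eq_zero fun j hj => by
      simp [ha j (Finset.mem_range.1 hj)]]
    simp [mul_comm]
  have hO : (fun t => g t - a M * t ^ M) =O[𝓝 0] fun t => t ^ (M + 1) := by
    refine IsBigO.of_norm_right ?_
    simpa [hpartial, norm_pow] using
      (hasFPowerSeriesAt_ofScalars_of_hasSum hg).isBigO_sub_partialSum_pow (M + 1)
  have hdiv : (fun t => (g t - a M * t ^ M) * (t ^ M)⁻¹) =O[𝓝[≠] 0] fun t : ℝ => t := by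
    refine ((hO.mono nhdsWithin_le_nhds).mul (isBigO_refl (fun t : ℝ => (t ^ M)⁻¹) _)).congr'
      EventuallyEq.rfl ?_
    filter_upwards [self_mem_nhdsWithin] with t ht
    rw [pow_succ', mul_assoc, mul_inv_cancel₀ (pow_ne_zero _ ht), mul_one]
  have := (hdiv.trans_tendsto (tendsto_nhdsWithin_of_tendsto_nhds tendsto_id)).add_const (a M)
  rw [zero_add] at this
  refine this.congr' ?_
  filter_upwards [self_mem_nhdsWithin] with t ht
  rw [sub_mul, mul_assoc, mul_inv_cancel₀ (pow_ne_zero _ ht), div_eq_mul_inv]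
  ring

theorem nonneg_and_odd_eq_zero_of_hasSum_nonneg {a : ℕ → ℝ} {g : ℝ → ℝ} {M : ℕ}
    (ha : ∀ j < M, a j = 0) (hg : ∀ᶠ t in 𝓝 0, HasSum (fun j => a j * t ^ j) (g t))
    (hg_nonneg : ∀ᶠ t in 𝓝 0, 0 ≤ g t) :
    0 ≤ a M ∧ (Odd M → a M = 0) := by
  have hlim := tendsto_div_pow_of_hasSum ha hg
  have hpos : 0 ≤ a M := by
    refine ge_of_tendsto (hlim.mono_left (nhdsGT_le_nhdsNE 0)) ?_
    filter_upwards [self_mem_nhdsWithin, nhdsWithin_le_nhds hg_nonneg] with t ht hgt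
    exact div_nonneg hgt (pow_nonneg (le_of_lt ht) _)
  refine ⟨hpos, fun hM => le_antisymm ?_ hpos⟩
  refine le_of_tendsto (hlim.mono_left (nhdsLT_le_nhdsNE 0)) ?_
  filter_upwards [self_mem_nhdsWithin, nhdsWithin_le_nhds hg_nonneg] with t ht hgt
  exact div_nonpos_of_nonneg_of_nonpos hgt (hM.pow_neg ht).le

theorem stmt_2_general (d : ℕ) (p : ℕ → MvPolynomial (Fin d) ℂ)
    (hhom : ∀ j, (p j).IsHomogeneous j)
    (φ : (Fin d → ℂ) → ℂ)
    (hconv : ∃ ε > 0, ∀ x : Fin d → ℂ, (∀ j, ‖x j‖ < ε) →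
      HasSum (fun j : ℕ => eval x (p j)) (φ x))
    (hpos : ∃ ε > 0, ∀ x : Fin d → ℝ, (∀ j, |x j| < ε) →
      0 ≤ (φ (fun j => (x j : ℂ))).im)
    (M : ℕ)
    (hM : ∃ m, ((p M).coeff m).im ≠ 0)
    (hMmin : ∀ j < M, ∀ m, ((p j).coeff m).im = 0) :
    Even M ∧ ∀ x : Fin d → ℝ, 0 ≤ (eval (fun j => (x j : ℂ)) (p M)).im := by
  obtain ⟨ε₁, hε₁, hconv⟩ := hconv
  obtain ⟨ε₂, hε₂, hpos⟩ := hpos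
  have hline : ∀ x : Fin d → ℝ, 0 ≤ (eval (fun j => (x j : ℂ)) (p M)).im ∧
      (Odd M → (eval (fun j => (x j : ℂ)) (p M)).im = 0) := by
    intro x
    have hε : 0 < min ε₁ ε₂ := lt_min hε₁ hε₂
    have hsmall : ∀ᶠ t in 𝓝 (0 : ℝ), ∀ i, |(t • x) i| < min ε₁ ε₂ := by
      have := (continuous_id.smul (continuous_const (y := x))).norm.tendsto' (0 : ℝ) 0 (by simp)
      filter_upwards [this.eventually (gt_mem_nhds hε)] with t ht i
      simpa using (pi_norm_lt_iff hε).1 ht i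
    refine nonneg_and_odd_eq_zero_of_hasSum_nonneg
      (a := fun j => (eval (fun i => (x i : ℂ)) (p j)).im)
      (g := fun t => (φ fun i => ((t • x) i : ℂ)).im) (fun j hj => ?_) ?_ ?_
    · rw [← eval_imPart, imPart_eq_zero (hMmin j hj), map_zero]
    · filter_upwards [hsmall] with t ht
      have := hasSum_im (hconv (fun i => ((t • x) i : ℂ)) fun i => by
        simpa only [norm_real, Real.norm_eq_abs] using (ht i).trans_le (min_le_left _ _))
      simpa only [(hhom _).im_eval_ofReal_smul] using this
    · filter_upwards [hsmall] with t ht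
      exact hpos _ fun i => (ht i).trans_le (min_le_right _ _)
  refine ⟨Nat.not_odd_iff_even.1 fun hodd => ?_, fun x => (hline x).1⟩
  obtain ⟨m, hm⟩ := hM
  have : imPart (p M) = 0 := MvPolynomial.funext fun x => by
    rw [eval_imPart, (hline x).2 hodd, map_zero]
  exact hm (by rw [← coeff_imPart, this, coeff_zero])

/-- Homogeneous expansion: if `φ = Σ_j φ_j` (homogeneous of degree `j`) is
analytic near `0`, `φ 0 = 0`, `Im φ ≥ 0` on `ℝ^d` near `0`, and `M` is the
smallest index such that `φ_M` has a non-real coefficient, then `M` is even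
and `Im φ_M ≥ 0` on `ℝ^d`. -/
theorem stmt_2 (d : ℕ) (p : ℕ → MvPolynomial (Fin d) ℂ)
    (hhom : ∀ j, (p j).IsHomogeneous j)
    (p0 : p 0 = 0)
    (φ : (Fin d → ℂ) → ℂ)
    (hconv : ∃ ε > 0, ∀ x : Fin d → ℂ, (∀ j, ‖x j‖ < ε) →
      HasSum (fun j : ℕ => eval x (p j)) (φ x))
    (hpos : ∃ ε > 0, ∀ x : Fin d → ℝ, (∀ j, |x j| < ε) →
      0 ≤ (φ (fun j => (x j : ℂ))).im)
    (M : ℕ)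
    (hM : ∃ m, ((p M).coeff m).im ≠ 0)
    (hMmin : ∀ j < M, ∀ m, ((p j).coeff m).im = 0) :
    Even M ∧ ∀ x : Fin d → ℝ, 0 ≤ (eval (fun j => (x j : ℂ)) (p M)).im :=
  stmt_2_general d p hhom φ hconv hpos M hM hMmin
end

section
/- Let φ be analytic near 0 in ℂ^d with φ(0) = 0, mapping small points of ℍ^d into the closed upper half-plane. If ∇φ(0) = 0 then φ is identically zero. -/
/-!
Restricted to a ray `s ↦ s • r` through a positive real vector `r`, `φ` becomes a function `g`
of one variable with `g 0 = g' 0 = 0` that maps small points of the upper half-plane into the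
closed upper half-plane. If `g ≢ 0`, then `g z = z ^ n h z` with `n ≥ 2` and `h 0 ≠ 0`; as
`z ↦ z ^ n` wraps the upper half-plane at least once around the origin, some ray `t • w` with
`Im w > 0` is sent into the open lower half-plane, a contradiction. So `φ` vanishes at all small
positive real vectors. A holomorphic function vanishing on an open subset of `ℝ^d` vanishes near
it in `ℂ^d` (restrict to the complex lines `t ↦ Re x + t • Im x`, which are real for real `t`),
and the identity theorem spreads this to a whole ball around `0`.
-/

open Complex Filter Metric Set Topology
open scoped Real

lemma Real.exists_pos_lt_two_pi_sin_add_neg {α : ℝ} (h₁ : -π < α) (h₂ : α ≤ π) :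
    ∃ s, 0 < s ∧ s < 2 * π ∧ Real.sin (s + α) < 0 := by
  by_cases hα : α ≤ -(π / 2)
  · refine ⟨π / 4, by positivity, by linarith [Real.pi_pos], ?_⟩
    apply Real.sin_neg_of_neg_of_neg_pi_lt <;> linarith
  · refine ⟨3 * π / 2 - α, by linarith, by linarith, ?_⟩
    rw [show 3 * π / 2 - α + α = π / 2 + π by ring, Real.sin_add_pi, Real.sin_pi_div_two]
    norm_num

lemma Complex.exists_im_pos_im_pow_mul_neg {n : ℕ} (hn : 2 ≤ n) {a : ℂ} (ha : a ≠ 0) :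
    ∃ w : ℂ, 0 < w.im ∧ (w ^ n * a).im < 0 := by
  obtain ⟨s, hs₀, hs₂, hsin⟩ :=
    Real.exists_pos_lt_two_pi_sin_add_neg (neg_pi_lt_arg a) (arg_le_pi a)
  have hn' : (2 : ℝ) ≤ n := by exact_mod_cast hn
  refine ⟨exp ((s / n : ℝ) * I), ?_, ?_⟩
  · rw [exp_ofReal_mul_I_im]
    apply Real.sin_pos_of_pos_of_lt_pi (by positivity)
    rw [div_lt_iff₀ (by positivity)]
    nlinarith [Real.pi_pos]
  · have hw : exp ((s / n : ℝ) * I) ^ n * a = ‖a‖ * exp ((s + arg a : ℝ) * I) := by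
      conv_lhs => rw [← norm_mul_exp_arg_mul_I a]
      have hn₀ : (n : ℂ) ≠ 0 := by exact_mod_cast (by omega : n ≠ 0)
      have hns : (n : ℂ) * ((s / n : ℝ) * I) = s * I := by push_cast; field_simp
      rw [← exp_nat_mul, hns, ofReal_add, add_mul, exp_add]
      ring
    rw [hw, im_ofReal_mul, exp_ofReal_mul_I_im]
    exact mul_neg_of_pos_of_neg (norm_pos_iff.mpr ha) hsin

theorem AnalyticAt.eventually_eq_zero_of_deriv_eq_zero_of_im_nonneg {g : ℂ → ℂ}
    (hg : AnalyticAt ℂ g 0) (h0 : g 0 = 0) (hd : deriv g 0 = 0)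
    (him : ∀ᶠ z in 𝓝[{z | 0 < z.im}] 0, 0 ≤ (g z).im) :
    ∀ᶠ z in 𝓝 0, g z = 0 := by
  by_contra hne
  obtain ⟨n, h, hh, hh0, heq⟩ := hg.exists_eventuallyEq_pow_smul_nonzero_iff.mpr hne
  replace heq : g =ᶠ[𝓝 0] fun z => z ^ n * h z :=
    heq.mono fun z hz => by simpa using hz
  have hn : 2 ≤ n := by
    by_contra! hn
    interval_cases n
    · exact hh0 (by simpa [h0] using heq.self_of_nhds.symm)
    · exact hh0 (by simpa [hd, hh.differentiableAt] using heq.deriv_eq.symm)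
  obtain ⟨w, hw, hwn⟩ := Complex.exists_im_pos_im_pow_mul_neg hn hh0
  have hray : Tendsto (fun t : ℝ => (t : ℂ) * w) (𝓝[>] 0) (𝓝[{z | 0 < z.im}] 0) := by
    refine tendsto_nhdsWithin_iff.mpr ⟨?_, eventually_mem_nhdsWithin.mono fun t ht => ?_⟩
    · exact ((continuous_ofReal.mul continuous_const).tendsto' 0 0 (by simp)).mono_left
        nhdsWithin_le_nhds
    · show 0 < ((t : ℂ) * w).im
      rw [im_ofReal_mul]
      exact mul_pos ht hw
  have hcont : Tendsto (fun t : ℝ => (w ^ n * h (t * w)).im) (𝓝[>] 0) (𝓝 (w ^ n * h 0).im) :=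
    (continuous_im.tendsto _).comp
      ((hh.continuousAt.tendsto.comp (hray.mono_right nhdsWithin_le_nhds)).const_mul _)
  obtain ⟨t, ht, hgt, heqt, hneg⟩ := (eventually_mem_nhdsWithin.and
    ((hray.eventually him).and (((hray.mono_right nhdsWithin_le_nhds).eventually heq).and
    (hcont.eventually (gt_mem_nhds hwn))))).exists
  simp only [heqt, mul_pow, mul_assoc, ← ofReal_pow, im_ofReal_mul] at hgt
  exact (mul_neg_of_pos_of_neg (pow_pos ht n) hneg).not_ge hgt

theorem AnalyticOnNhd.apply_ofReal_eq_zero_of_im_nonneg {ι : Type*} [Fintype ι]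
    {φ : (ι → ℂ) → ℂ} {U : Set (ι → ℂ)} (hφ : AnalyticOnNhd ℂ φ U)
    (hUc : Convex ℝ U) (h0U : 0 ∈ U) (h0 : φ 0 = 0) (hgrad : fderiv ℂ φ 0 = 0)
    (him : ∀ᶠ x in 𝓝[{x | ∀ j, 0 < (x j).im}] 0, 0 ≤ (φ x).im)
    {r : ι → ℝ} (hr : ∀ j, 0 < r j) (hrU : (fun j => (r j : ℂ)) ∈ U) :
    φ (fun j => (r j : ℂ)) = 0 := by
  set v : ι → ℂ := fun j => (r j : ℂ)
  set S : Set ℂ := (fun s : ℂ => s • v) ⁻¹' U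
  have hS : IsPreconnected S :=
    (hUc.is_linear_preimage ⟨fun s t => add_smul s t v, fun c s => smul_assoc c s v⟩).isPreconnected
  have hg : AnalyticOnNhd ℂ (fun s : ℂ => φ (s • v)) S := fun s hs =>
    (hφ _ hs).comp (f := fun s : ℂ => s • v) (analyticAt_id.smul analyticAt_const)
  have hgd : deriv (fun s : ℂ => φ (s • v)) 0 = 0 := by
    have : HasDerivAt (fun s : ℂ => φ (s • v)) (fderiv ℂ φ 0 ((1 : ℂ) • v)) 0 :=
      (hφ 0 h0U).differentiableAt.hasFDerivAt.comp_hasDerivAt_of_eq 0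
        ((hasDerivAt_id (0 : ℂ)).smul_const v) (zero_smul ℂ v).symm
    rw [this.deriv, hgrad]
    rfl
  have hray : Tendsto (fun s : ℂ => s • v) (𝓝[{z | 0 < z.im}] 0)
      (𝓝[{x | ∀ j, 0 < (x j).im}] 0) := by
    refine tendsto_nhdsWithin_iff.mpr ⟨?_, eventually_mem_nhdsWithin.mono fun s hs j => ?_⟩
    · exact ((continuous_id.smul continuous_const).tendsto' 0 0 (zero_smul ℂ v)).mono_left
        nhdsWithin_le_nhds
    · show 0 < (s * r j).im
      rw [mul_comm, im_ofReal_mul]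
      exact mul_pos (hr j) hs
  have hg0 : ∀ᶠ s : ℂ in 𝓝 0, φ (s • v) = 0 :=
    (hg 0 (by simpa [S] using h0U)).eventually_eq_zero_of_deriv_eq_zero_of_im_nonneg
      (by simpa using h0) hgd (hray.eventually him)
  simpa using hg.eqOn_zero_of_preconnected_of_eventuallyEq_zero hS (by simpa [S] using h0U) hg0
    (show (1 : ℂ) ∈ S by simpa [S] using hrU)

theorem AnalyticOnNhd.eqOn_zero_of_forall_ofReal {ι E : Type*} [Fintype ι]
    [NormedAddCommGroup E] [NormedSpace ℂ E] {φ : (ι → ℂ) → E} {c : ι → ℝ} {R : ℝ}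
    (hφ : AnalyticOnNhd ℂ φ (ball (fun j => (c j : ℂ)) R))
    (hreal : ∀ a : ι → ℝ, (fun j => (a j : ℂ)) ∈ ball (fun j => (c j : ℂ)) R →
      φ (fun j => (a j : ℂ)) = 0) :
    EqOn φ 0 (ball (fun j => (c j : ℂ)) (R / 3)) := by
  intro x hx
  have hR : 0 < R := by linarith [pos_of_mem_ball hx]
  set L : ℂ → ι → ℂ := fun t => (fun j => ((x j).re : ℂ)) + t • fun j => ((x j).im : ℂ)
  have hLI : L I = x := funext fun j => by simp [L, mul_comm I, re_add_im]
  have hL : ∀ t ∈ ball (0 : ℂ) 2, L t ∈ ball (fun j => (c j : ℂ)) R := by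
    intro t ht
    rw [mem_ball_zero_iff] at ht
    refine mem_ball.mpr ((dist_pi_lt_iff hR).mpr fun j => ?_)
    have hxj : ‖x j - c j‖ < R / 3 := by
      rw [← dist_eq_norm]; exact (dist_le_pi_dist x _ j).trans_lt (mem_ball.mp hx)
    calc dist (L t j) (c j) = ‖(((x j - c j).re : ℝ) : ℂ) + t * (x j - c j).im‖ := by
          simp only [L, dist_eq_norm, Pi.add_apply, Pi.smul_apply, smul_eq_mul, sub_re, sub_im,
            ofReal_re, ofReal_im, ofReal_sub, sub_zero]
          ring_nf
      _ ≤ ‖x j - c j‖ + ‖t‖ * ‖x j - c j‖ := by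
          refine (norm_add_le _ _).trans (add_le_add ?_ ?_)
          · rw [norm_real, Real.norm_eq_abs]; exact abs_re_le_norm _
          · rw [norm_mul, norm_real, Real.norm_eq_abs]
            exact mul_le_mul_of_nonneg_left (abs_im_le_norm _) (norm_nonneg _)
      _ < R := by nlinarith [norm_nonneg t, norm_nonneg (x j - c j)]
  have hf : AnalyticOnNhd ℂ (φ ∘ L) (ball 0 2) := fun t ht =>
    (hφ _ (hL t ht)).comp (analyticAt_const.add (analyticAt_id.smul analyticAt_const))
  have hfreal : ∀ᶠ t : ℝ in 𝓝[≠] 0, (φ ∘ L) t = 0 := by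
    refine eventually_nhdsWithin_of_eventually_nhds ?_
    filter_upwards [ball_mem_nhds (0 : ℝ) two_pos] with t ht
    have hLt : L t = fun j => (((x j).re + t * (x j).im : ℝ) : ℂ) := by
      ext j; simp [L]
    rw [Function.comp_apply, hLt]
    exact hreal _ (hLt ▸ hL t (by simpa using ht))
  have hof : Tendsto ((↑) : ℝ → ℂ) (𝓝[≠] 0) (𝓝[≠] ((0 : ℝ) : ℂ)) :=
    continuous_ofReal.continuousWithinAt.tendsto_nhdsWithin fun _ _ => by simp_all
  rw [← hLI]
  exact hf.eqOn_zero_of_preconnected_of_frequently_eq_zero (convex_ball 0 2).isPreconnected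
    (by simp) (hof.frequently hfreal.frequently) (by simp)

/-- If `φ` is analytic at `0 ∈ ℂ^d`, `φ 0 = 0`, `φ` maps small points of `ℍ^d`
into the closed upper half-plane, and `∇φ(0) = 0`, then `φ` vanishes
identically near `0`. -/
theorem stmt_3 (d : ℕ) (φ : (Fin d → ℂ) → ℂ) (hφ : AnalyticAt ℂ φ 0)
    (h0 : φ 0 = 0)
    (hmap : ∃ ε > 0, ∀ x : Fin d → ℂ,
      (∀ j, 0 < (x j).im) → (∀ j, ‖x j‖ < ε) → 0 ≤ (φ x).im)
    (hgrad : fderiv ℂ φ 0 = 0) :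
    ∀ᶠ x in nhds (0 : Fin d → ℂ), φ x = 0 := by
  obtain ⟨ε, hε, hmap⟩ := hmap
  obtain ⟨ρ, hρ, hφρ⟩ : ∃ ρ > 0, AnalyticOnNhd ℂ φ (ball 0 ρ) :=
    eventually_nhds_iff_ball.mp hφ.eventually_analyticAt
  have him : ∀ᶠ x in 𝓝[{x | ∀ j, 0 < (x j).im}] 0, 0 ≤ (φ x).im := by
    filter_upwards [nhdsWithin_le_nhds (ball_mem_nhds 0 hε), self_mem_nhdsWithin] with x hxε hx
    exact hmap x hx fun j => (norm_le_pi_norm x j).trans_lt (mem_ball_zero_iff.mp hxε)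
  set c : Fin d → ℂ := fun _ => ((ρ / 2 : ℝ) : ℂ)
  have hcρ : ‖c‖ ≤ ρ / 2 := (pi_norm_const_le _).trans (by simp [abs_of_pos hρ])
  have hc : c ∈ ball 0 ρ := mem_ball_zero_iff.mpr (by linarith)
  have hball : ball c (ρ / 2) ⊆ ball 0 ρ := ball_subset_ball' (by rw [dist_zero_right]; linarith)
  have hpos : ∀ a : Fin d → ℝ, (fun j => (a j : ℂ)) ∈ ball c (ρ / 2) → ∀ j, 0 < a j := by
    intro a ha j
    have hj := (dist_le_pi_dist _ _ j).trans_lt ha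
    rw [dist_eq_norm, ← ofReal_sub, norm_real, Real.norm_eq_abs] at hj
    linarith [neg_abs_le (a j - ρ / 2)]
  have hφc : EqOn φ 0 (ball c (ρ / 2 / 3)) :=
    (hφρ.mono hball).eqOn_zero_of_forall_ofReal fun a ha =>
      hφρ.apply_ofReal_eq_zero_of_im_nonneg (convex_ball 0 ρ) (mem_ball_self hρ) h0 hgrad him
        (hpos a ha) (hball ha)
  have hφ0 : EqOn φ 0 (ball 0 ρ) :=
    hφρ.eqOn_zero_of_preconnected_of_eventuallyEq_zero (convex_ball 0 ρ).isPreconnected hc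
      (eventually_of_mem (ball_mem_nhds c (by positivity)) hφc)
  filter_upwards [ball_mem_nhds 0 hρ] with x hx using hφ0 hx
end

section
/- Let φ be analytic near 0 in ℂ^d with φ(0)=0, all components of ∇φ(0) strictly positive real numbers, and Im φ(x) ≥ 0 for real x near 0. Then for x = u + iv ∈ closure(ℍ)^d close to 0 (u ∈ ℝ^d, v ∈ [0,∞)^d), one has Im(φ(x)) ≥ c·(Im φ(u) + |v|) for some constant c > 0. -/
open Complex Filter Set Topology

/-!
Since `∂ⱼφ(0)` is real and positive, `Re ∂ⱼφ ≥ a > 0` on a neighbourhood of `0`. Along the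
vertical segment `t ↦ u + i t v` the derivative of `Im φ` is `∑ⱼ vⱼ Re ∂ⱼφ ≥ a ∑ⱼ vⱼ ≥ a |v|`,
so `Im φ(u + iv) ≥ Im φ(u) + a |v|`; as `Im φ(u) ≥ 0`, the claim holds with `c = min 1 a`.
-/

lemma exists_pos_forall_lt_of_pos {ι : Type*} [Finite ι] {r : ι → ℝ} (hr : ∀ i, 0 < r i) :
    ∃ a > 0, ∀ i, a < r i :=
  (((eventually_all.2 fun i => eventually_lt_nhds (hr i)).filter_mono nhdsWithin_le_nhds).and
    (self_mem_nhdsWithin : ∀ᶠ a in 𝓝[>] (0 : ℝ), 0 < a)).exists.imp fun _ ha => ⟨ha.2, ha.1⟩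

lemma norm_le_sum_of_nonneg {ι : Type*} [Fintype ι] {v : ι → ℝ} (hv : ∀ j, 0 ≤ v j) :
    ‖v‖ ≤ ∑ j, v j :=
  (pi_norm_le_iff_of_nonneg (Finset.sum_nonneg fun j _ => hv j)).2 fun j => by
    rw [Real.norm_of_nonneg (hv j)]
    exact Finset.single_le_sum (fun i _ => hv i) (Finset.mem_univ j)

lemma norm_ofReal_add_smul_ofReal_mul_I_le {ι : Type*} [Fintype ι] (u v : ι → ℝ) {t : ℝ}
    (ht : t ∈ Icc (0 : ℝ) 1) :
    ‖(fun j => (u j : ℂ)) + t • fun j => (v j : ℂ) * I‖ ≤ ‖u‖ + ‖v‖ := by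
  refine (pi_norm_le_iff_of_nonneg (by positivity)).2 fun j => ?_
  calc ‖(u j : ℂ) + t • ((v j : ℂ) * I)‖ ≤ ‖u j‖ + |t| * ‖v j‖ := by
        refine (norm_add_le _ _).trans ?_
        simp
    _ ≤ ‖u‖ + 1 * ‖v‖ := by
        gcongr
        · exact norm_le_pi_norm u j
        · exact abs_le.2 ⟨by linarith [ht.1], ht.2⟩
        · exact norm_le_pi_norm v j
    _ = ‖u‖ + ‖v‖ := by rw [one_mul]

lemma ContinuousLinearMap.im_apply_ofReal_mul_I {ι : Type*} [Fintype ι] [DecidableEq ι]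
    (L : (ι → ℂ) →L[ℂ] ℂ) (v : ι → ℝ) :
    (L fun j => (v j : ℂ) * I).im = ∑ j, v j * (L (Pi.single j 1)).re := by
  conv_lhs => rw [pi_eq_sum_univ' fun j => (v j : ℂ) * I]
  simp [map_sum, im_sum, mul_im]

lemma hasDerivAt_im_comp_add_smul {E : Type*} [NormedAddCommGroup E] [NormedSpace ℂ E]
    {φ : E → ℂ} {z w : E} {t : ℝ} (hφ : DifferentiableAt ℂ φ (z + t • w)) :
    HasDerivAt (fun s : ℝ => (φ (z + s • w)).im) (fderiv ℂ φ (z + t • w) w).im t := by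
  have hline : HasDerivAt (fun s : ℝ => z + s • w) w t := by
    simpa using ((hasDerivAt_id t).smul_const w).const_add z
  have hcomp : HasDerivAt (fun s : ℝ => φ (z + s • w)) (fderiv ℂ φ (z + t • w) w) t :=
    ((hφ.hasFDerivAt.restrictScalars ℝ).comp_hasDerivAt t hline :)
  exact imCLM.hasFDerivAt.comp_hasDerivAt t hcomp

lemma im_add_mul_sum_le_im_add_ofReal_mul_I {ι : Type*} [Fintype ι] [DecidableEq ι]
    {φ : (ι → ℂ) → ℂ} {z : ι → ℂ} {v : ι → ℝ} {a : ℝ} (hv : ∀ j, 0 ≤ v j)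
    (hφ : ∀ t ∈ Icc (0 : ℝ) 1, DifferentiableAt ℂ φ (z + t • fun j => (v j : ℂ) * I) ∧
      ∀ j, a ≤ (fderiv ℂ φ (z + t • fun j => (v j : ℂ) * I) (Pi.single j 1)).re) :
    (φ z).im + a * ∑ j, v j ≤ (φ (z + fun j => (v j : ℂ) * I)).im := by
  set w : ι → ℂ := fun j => (v j : ℂ) * I with hw
  have hderiv : ∀ t ∈ Icc (0 : ℝ) 1, HasDerivAt (fun s : ℝ => (φ (z + s • w)).im)
      (fderiv ℂ φ (z + t • w) w).im t :=
    fun t ht => hasDerivAt_im_comp_add_smul (hφ t ht).1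
  have hderiv_ge : ∀ t ∈ interior (Icc (0 : ℝ) 1),
      a * ∑ j, v j ≤ deriv (fun s : ℝ => (φ (z + s • w)).im) t := by
    intro t ht_int
    have ht := interior_subset ht_int
    rw [(hderiv t ht).deriv, hw, ContinuousLinearMap.im_apply_ofReal_mul_I, Finset.mul_sum]
    exact Finset.sum_le_sum fun j _ => by
      rw [mul_comm]
      exact mul_le_mul_of_nonneg_left ((hφ t ht).2 j) (hv j)
  have hgrowth := (convex_Icc (0 : ℝ) 1).mul_sub_le_image_sub_of_le_deriv
    (fun t ht => (hderiv t ht).continuousAt.continuousWithinAt)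
    (fun t ht => (hderiv t (interior_subset ht)).differentiableAt.differentiableWithinAt)
    hderiv_ge 0 (by simp) 1 (by simp) zero_le_one
  simp only [sub_zero, mul_one, zero_smul, add_zero, one_smul] at hgrowth
  linarith

lemma AnalyticAt.eventually_lt_re_fderiv_single {ι : Type*} [Fintype ι] [DecidableEq ι]
    {φ : (ι → ℂ) → ℂ} {x₀ : ι → ℂ} (hφ : AnalyticAt ℂ φ x₀) {a : ℝ}
    (ha : ∀ j, a < (fderiv ℂ φ x₀ (Pi.single j 1)).re) :
    ∀ᶠ x in 𝓝 x₀, DifferentiableAt ℂ φ x ∧ ∀ j, a < (fderiv ℂ φ x (Pi.single j 1)).re := by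
  refine (hφ.eventually_analyticAt.mono fun x hx => hx.differentiableAt).and
    (eventually_all.2 fun j => ?_)
  have hcont : ContinuousAt (fun x => (fderiv ℂ φ x (Pi.single j 1)).re) x₀ :=
    continuous_re.continuousAt.comp (hφ.fderiv.continuousAt.clm_apply continuousAt_const)
  exact continuousAt_const.eventually_lt hcont (ha j)

theorem stmt_6_general (d : ℕ) (φ : (Fin d → ℂ) → ℂ) (hφ : AnalyticAt ℂ φ 0)
    (hgrad : ∀ j : Fin d, (fderiv ℂ φ 0 (Pi.single j 1)).im = 0 ∧
      0 < (fderiv ℂ φ 0 (Pi.single j 1)).re)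
    (hpos : ∃ ε > 0, ∀ u : Fin d → ℝ, (∀ j, |u j| < ε) →
      0 ≤ (φ (fun j => (u j : ℂ))).im) :
    ∃ c > 0, ∃ ε > 0, ∀ u v : Fin d → ℝ, (∀ j, 0 ≤ v j) →
      (∀ j, |u j| < ε) → (∀ j, |v j| < ε) →
      c * ((φ (fun j => (u j : ℂ))).im + ‖v‖) ≤
        (φ (fun j => (u j : ℂ) + (v j : ℂ) * I)).im := by
  obtain ⟨ε₀, hε₀, hpos⟩ := hpos
  obtain ⟨a, ha, ha_lt⟩ := exists_pos_forall_lt_of_pos fun j => (hgrad j).2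
  obtain ⟨δ, hδ, hball⟩ :=
    Metric.eventually_nhds_iff_ball.1 (hφ.eventually_lt_re_fderiv_single ha_lt)
  refine ⟨min 1 a, lt_min one_pos ha, min ε₀ (δ / 2), by positivity, fun u v hv hu hv_lt => ?_⟩
  have hu_norm : ‖u‖ < δ / 2 :=
    (pi_norm_lt_iff (by positivity)).2 fun j => (hu j).trans_le (min_le_right _ _)
  have hv_norm : ‖v‖ < δ / 2 :=
    (pi_norm_lt_iff (by positivity)).2 fun j => (hv_lt j).trans_le (min_le_right _ _)
  have hsegment := im_add_mul_sum_le_im_add_ofReal_mul_I (z := fun j => (u j : ℂ)) (a := a) hv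
    fun t ht => (hball _ (mem_ball_zero_iff.2 ((norm_ofReal_add_smul_ofReal_mul_I_le u v ht).trans_lt
      (by linarith)))).imp_right fun h j => (h j).le
  have hφu : 0 ≤ (φ fun j => (u j : ℂ)).im := hpos u fun j => (hu j).trans_le (min_le_left _ _)
  calc min 1 a * ((φ fun j => (u j : ℂ)).im + ‖v‖)
      ≤ (φ fun j => (u j : ℂ)).im + a * ∑ j, v j := by
        rw [mul_add]
        exact add_le_add (mul_le_of_le_one_left hφu (min_le_left _ _))
          (mul_le_mul (min_le_right _ _) (norm_le_sum_of_nonneg hv) (norm_nonneg _) ha.le)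
    _ ≤ _ := hsegment

/-- If `φ` is analytic at `0`, `φ 0 = 0`, all components of `∇φ(0)` are
strictly positive reals, and `Im φ ≥ 0` on `ℝ^d` near `0`, then for
`x = u + iv` in the closed poly-upper-half-plane close to `0`,
`Im(φ(x)) ≥ c·(Im φ(u) + |v|)`. -/
theorem stmt_6 (d : ℕ) (φ : (Fin d → ℂ) → ℂ) (hφ : AnalyticAt ℂ φ 0)
    (h0 : φ 0 = 0)
    (hgrad : ∀ j : Fin d, (fderiv ℂ φ 0 (Pi.single j 1)).im = 0 ∧
      0 < (fderiv ℂ φ 0 (Pi.single j 1)).re)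
    (hpos : ∃ ε > 0, ∀ u : Fin d → ℝ, (∀ j, |u j| < ε) →
      0 ≤ (φ (fun j => (u j : ℂ))).im) :
    ∃ c > 0, ∃ ε > 0, ∀ u v : Fin d → ℝ, (∀ j, 0 ≤ v j) →
      (∀ j, |u j| < ε) → (∀ j, |v j| < ε) →
      c * ((φ (fun j => (u j : ℂ))).im + ‖v‖) ≤
        (φ (fun j => (u j : ℂ) + (v j : ℂ) * I)).im :=
  stmt_6_general d φ hφ hgrad hpos
end

section
/- Let φ be analytic near 0 in ℂ^d with φ(0)=0, ∇φ(0) ∈ (0,∞)^d, and Im φ ≥ 0 on ℝ^d near 0. Write φ = A + iB where A, B are the real and imaginary parts of the coefficient series. Then the function B(x)/(z + φ(x)) is bounded on a set of the form (ℍ^{d} × ℍ) ∩ (polydisk of radius ε about 0) for some ε > 0. -/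
/-!
Write `x = a + i v` with `a, v` real and `v > 0`. Near `0`, `φ` is approximated by
`T = φ'(0)` up to an error `c ‖·‖` with `c` as small as we like (strict differentiability).
Hence `φ(a + i v) - conj (φ (a - i v))` differs from `φ a - conj (φ a) = 2 i Im φ(a)` by
`O(‖v‖)`, while `Im φ(x) ≥ Im φ(a) + Im T(i v) - c ‖v‖ ≥ Im φ(a) + c ‖v‖` once the partial
derivatives of `φ` at `0` have real parts at least `2c`. As `Im φ(a) ≥ 0`, both the numerator
and `Im φ(x) ≤ |z + φ(x)|` are comparable to `Im φ(a) + c ‖v‖`.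
-/

open Complex ComplexConjugate Metric Filter Topology NNReal

theorem Finite.exists_pos_forall_le {ι : Type*} [Finite ι] {a : ι → ℝ} (ha : ∀ j, 0 < a j) :
    ∃ m > 0, ∀ j, m ≤ a j := by
  have hle : ∀ᶠ m in 𝓝[>] (0 : ℝ), ∀ j, m ≤ a j :=
    eventually_all.2 fun j => nhdsWithin_le_nhds (eventually_le_nhds (ha j))
  exact (hle.and self_mem_nhdsWithin).exists.imp fun _ h => ⟨h.2, h.1⟩

namespace ApproximatesLinearOn

variable {E : Type*} [NormedAddCommGroup E] [NormedSpace ℂ E] {φ : E → ℂ} {T : E →L[ℂ] ℂ}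
  {s : Set E} {c : ℝ≥0}

theorem norm_image_sub_le (hφ : ApproximatesLinearOn φ T s c) {x y : E} (hx : x ∈ s)
    (hy : y ∈ s) : ‖φ x - φ y‖ ≤ (‖T‖ + c) * ‖x - y‖ := by
  simpa [Subtype.dist_eq, dist_eq_norm] using hφ.lipschitz.dist_le_mul ⟨x, hx⟩ ⟨y, hy⟩

theorem norm_sub_conj_le (hφ : ApproximatesLinearOn φ T s c) {a w : E} (ha : a ∈ s)
    (hp : a + w ∈ s) (hm : a - w ∈ s) :
    ‖φ (a + w) - conj (φ (a - w))‖ ≤ 2 * |(φ a).im| + 2 * ((‖T‖ + c) * ‖w‖) := by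
  have hsplit : φ (a + w) - conj (φ (a - w))
      = (φ (a + w) - φ a) + (φ a - conj (φ a)) - conj (φ (a - w) - φ a) := by
    rw [map_sub]; ring
  have hmid : ‖φ a - conj (φ a)‖ = 2 * |(φ a).im| := by
    rw [sub_conj, norm_mul, norm_I, mul_one, norm_real, Real.norm_eq_abs, abs_mul, abs_two]
  calc ‖φ (a + w) - conj (φ (a - w))‖
      ≤ ‖φ (a + w) - φ a‖ + ‖φ a - conj (φ a)‖ + ‖φ (a - w) - φ a‖ := by
        rw [hsplit, ← RCLike.norm_conj (φ (a - w) - φ a)]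
        exact (norm_sub_le _ _).trans (add_le_add_left (norm_add_le _ _) _)
    _ ≤ (‖T‖ + c) * ‖w‖ + 2 * |(φ a).im| + (‖T‖ + c) * ‖w‖ := by
        gcongr
        · simpa using hφ.norm_image_sub_le hp ha
        · exact hmid.le
        · simpa using hφ.norm_image_sub_le hm ha
    _ = _ := by ring

theorem im_add_sub_le_im (hφ : ApproximatesLinearOn φ T s c) {a w : E} (ha : a ∈ s)
    (hp : a + w ∈ s) : (φ a).im + (T w).im - c * ‖w‖ ≤ (φ (a + w)).im := by
  have h := (abs_im_le_norm _).trans (hφ _ hp _ ha)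
  rw [add_sub_cancel_left, sub_im, sub_im, abs_le] at h
  linarith [h.1]

end ApproximatesLinearOn

section

variable {ι : Type*} [Fintype ι]

theorem norm_ofReal_mul_I (v : ι → ℝ) : ‖fun j => (v j : ℂ) * I‖ = ‖v‖ := by
  simp [Pi.norm_def]

theorem mul_norm_le_im_apply_ofReal_mul_I [DecidableEq ι] (T : (ι → ℂ) →L[ℂ] ℂ) {m : ℝ}
    (hm : 0 ≤ m) (hT : ∀ j, m ≤ (T (Pi.single j 1)).re) {v : ι → ℝ} (hv : ∀ j, 0 ≤ v j) :
    m * ‖v‖ ≤ (T fun j => (v j : ℂ) * I).im := by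
  have hnorm : ‖v‖ ≤ ∑ j, v j :=
    (pi_norm_le_iff_of_nonneg (Finset.sum_nonneg fun j _ => hv j)).2 fun i => by
      rw [Real.norm_of_nonneg (hv i)]
      exact Finset.single_le_sum (fun j _ => hv j) (Finset.mem_univ i)
  have hT' : (T fun j => (v j : ℂ) * I).im = ∑ j, v j * (T (Pi.single j 1)).re := by
    conv_lhs => rw [pi_eq_sum_univ' fun j => (v j : ℂ) * I]
    simp [mul_comm, mul_assoc]
  calc m * ‖v‖ ≤ ∑ j, m * v j := by
        rw [← Finset.mul_sum]; exact mul_le_mul_of_nonneg_left hnorm hm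
    _ ≤ ∑ j, v j * (T (Pi.single j 1)).re := Finset.sum_le_sum fun j _ => by
        rw [mul_comm]; exact mul_le_mul_of_nonneg_left (hT j) (hv j)
    _ = _ := hT'.symm

theorem norm_sub_conj_le_mul_im [DecidableEq ι] {φ : (ι → ℂ) → ℂ} {T : (ι → ℂ) →L[ℂ] ℂ}
    {s : Set (ι → ℂ)} {c : ℝ≥0} (hc : 0 < c) (hφ : ApproximatesLinearOn φ T s c)
    (hT : ∀ j, 2 * (c : ℝ) ≤ (T (Pi.single j 1)).re) {x : ι → ℂ} (hx : ∀ j, 0 ≤ (x j).im)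
    (hxs : x ∈ s) (hre : (fun j => ((x j).re : ℂ)) ∈ s) (hconj : (fun j => conj (x j)) ∈ s)
    (hpos : 0 ≤ (φ fun j => ((x j).re : ℂ)).im) :
    ‖φ x - conj (φ fun j => conj (x j))‖ ≤ 2 * (1 + (‖T‖ + c) / c) * (φ x).im := by
  set a : ι → ℂ := fun j => ((x j).re : ℂ)
  set v : ι → ℝ := fun j => (x j).im
  set w : ι → ℂ := fun j => (v j : ℂ) * I
  have hx_eq : x = a + w := funext fun j => (re_add_im (x j)).symm
  have hconj_eq : (fun j => conj (x j)) = a - w := funext fun j => by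
    apply Complex.ext <;> simp [a, w, v]
  rw [hconj_eq] at hconj ⊢
  rw [hx_eq] at hxs ⊢
  have hnum := hφ.norm_sub_conj_le hre hxs hconj
  have hden := hφ.im_add_sub_le_im hre hxs
  have hTw : 2 * (c : ℝ) * ‖v‖ ≤ (T w).im :=
    mul_norm_le_im_apply_ofReal_mul_I T (by positivity) hT hx
  rw [norm_ofReal_mul_I, abs_of_nonneg hpos] at hnum
  rw [norm_ofReal_mul_I] at hden
  have hc' : (0 : ℝ) < c := hc
  have hK : 0 ≤ (‖T‖ + c) / c * (φ a).im := by positivity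
  have hexpand : (1 + (‖T‖ + c) / c) * ((φ a).im + c * ‖v‖)
      = (φ a).im + c * ‖v‖ + (‖T‖ + c) / c * (φ a).im + (‖T‖ + c) * ‖v‖ := by
    field_simp
    ring
  calc ‖φ (a + w) - conj (φ (a - w))‖ ≤ 2 * (φ a).im + 2 * ((‖T‖ + c) * ‖v‖) := hnum
    _ ≤ 2 * (1 + (‖T‖ + c) / c) * ((φ a).im + c * ‖v‖) := by
        rw [mul_assoc, hexpand]
        linarith [mul_nonneg hc'.le (norm_nonneg v)]
    _ ≤ 2 * (1 + (‖T‖ + c) / c) * (φ (a + w)).im := by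
        gcongr
        linarith

end

theorem stmt_7_general (d : ℕ) (φ : (Fin d → ℂ) → ℂ) (hφ : AnalyticAt ℂ φ 0)
    (hgrad : ∀ j : Fin d, (fderiv ℂ φ 0 (Pi.single j 1)).im = 0 ∧
      0 < (fderiv ℂ φ 0 (Pi.single j 1)).re)
    (hpos : ∃ ε > 0, ∀ u : Fin d → ℝ, (∀ j, |u j| < ε) →
      0 ≤ (φ (fun j => (u j : ℂ))).im) :
    ∃ C > 0, ∃ ε > 0, ∀ (x : Fin d → ℂ) (z : ℂ),
      (∀ j, 0 < (x j).im) → 0 < z.im → (∀ j, ‖x j‖ < ε) → ‖z‖ < ε →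
      ‖(φ x - (starRingEnd ℂ) (φ (fun j => (starRingEnd ℂ) (x j)))) / (2 * I)‖
        ≤ C * ‖z + φ x‖ := by
  set T := fderiv ℂ φ 0
  obtain ⟨m, hm, hmT⟩ := Finite.exists_pos_forall_le fun j => (hgrad j).2
  set c : ℝ≥0 := ⟨m / 2, by positivity⟩
  have hc : 0 < c := half_pos hm
  have hcT : ∀ j, 2 * (c : ℝ) ≤ (T (Pi.single j 1)).re := fun j => by
    change 2 * (m / 2) ≤ _; linarith [hmT j]
  obtain ⟨s, hs, hφs⟩ := hφ.hasStrictFDerivAt.approximates_deriv_on_nhds (Or.inr hc)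
  obtain ⟨δ, hδ, hδs⟩ := Metric.mem_nhds_iff.1 hs
  obtain ⟨ε, hε, hpos⟩ := hpos
  refine ⟨1 + (‖T‖ + c) / c, by positivity, min δ ε, lt_min hδ hε, fun x z hx hz hxε _ => ?_⟩
  have hmem : ∀ y : Fin d → ℂ, (∀ j, ‖y j‖ ≤ ‖x j‖) → y ∈ s := fun y hy =>
    hδs <| mem_ball_zero_iff.2 <| (pi_norm_lt_iff hδ).2 fun j =>
      (hy j).trans_lt <| (hxε j).trans_le (min_le_left _ _)
  have hre_pos : 0 ≤ (φ fun j => ((x j).re : ℂ)).im :=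
    hpos _ fun j => (abs_re_le_norm _).trans_lt ((hxε j).trans_le (min_le_right _ _))
  have hkey := norm_sub_conj_le_mul_im hc hφs hcT (fun j => (hx j).le)
    (hmem x fun _ => le_rfl) (hmem _ fun j => by simpa using abs_re_le_norm (x j))
    (hmem _ fun j => by simp) hre_pos
  rw [norm_div, norm_mul, norm_I, mul_one, Complex.norm_two, div_le_iff₀ two_pos]
  calc _ ≤ 2 * (1 + (‖T‖ + c) / c) * (φ x).im := hkey
    _ ≤ 2 * (1 + (‖T‖ + c) / c) * (z + φ x).im := by rw [add_im]; gcongr; linarith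
    _ ≤ 2 * (1 + (‖T‖ + c) / c) * ‖z + φ x‖ := by gcongr; exact im_le_norm _
    _ = _ := by ring

/-- With `φ` analytic at `0`, `φ 0 = 0`, `∇φ(0) ∈ (0,∞)^d`, and `Im φ ≥ 0` on
`ℝ^d` near `0`, the function `B(x)/(z + φ(x))` is bounded on
`(ℍ^d × ℍ) ∩ (small polydisk)`, where `B(x) = (φ(x) − conj(φ(conj x)))/(2i)`
is the imaginary-coefficient part of `φ`. -/
theorem stmt_7 (d : ℕ) (φ : (Fin d → ℂ) → ℂ) (hφ : AnalyticAt ℂ φ 0)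
    (h0 : φ 0 = 0)
    (hgrad : ∀ j : Fin d, (fderiv ℂ φ 0 (Pi.single j 1)).im = 0 ∧
      0 < (fderiv ℂ φ 0 (Pi.single j 1)).re)
    (hpos : ∃ ε > 0, ∀ u : Fin d → ℝ, (∀ j, |u j| < ε) →
      0 ≤ (φ (fun j => (u j : ℂ))).im) :
    ∃ C > 0, ∃ ε > 0, ∀ (x : Fin d → ℂ) (z : ℂ),
      (∀ j, 0 < (x j).im) → 0 < z.im → (∀ j, ‖x j‖ < ε) → ‖z‖ < ε →
      ‖(φ x - (starRingEnd ℂ) (φ (fun j => (starRingEnd ℂ) (x j)))) / (2 * I)‖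
        ≤ C * ‖z + φ x‖ :=
  stmt_7_general d φ hφ hgrad hpos
end

section
/- Let φ be analytic near 0 in ℂ^d with φ(0)=0, ∇φ(0) ∈ (0,∞)^d, and Im φ ≥ 0 on ℝ^d near 0, with real/imaginary coefficient decomposition φ = A + iB. Suppose f ∈ ℂ{x_1,…,x_d} satisfies |f(u)| ≤ C·B(u) for all real u near 0. Then f(x)/(z + φ(x)) is bounded on ℍ^{d+1} intersected with a small polydisk about the origin. -/
/-!
Write `x = u + i v` with `u, v` real and `v > 0`. Strict differentiability of `φ` at `0`, together
with `Re ∂ⱼφ(0) > 0`, gives `Im φ(u + i v) ≥ B(u) + c ∑ⱼ vⱼ`, while `f` is Lipschitz near `0`, so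
`‖f(u + i v)‖ ≤ C B(u) + K ∑ⱼ vⱼ`. Since `Im z > 0`, `‖z + φ(x)‖ ≥ Im φ(x)`, which dominates both
terms up to a constant.
-/

open Complex

section

variable {ι : Type*}

theorem exists_pos_forall_le_of_forall_pos [Finite ι] {g : ι → ℝ} (hg : ∀ j, 0 < g j) :
    ∃ a > 0, ∀ j, a ≤ g j := by
  cases isEmpty_or_nonempty ι
  · exact ⟨1, one_pos, isEmptyElim⟩
  · obtain ⟨j₀, hj₀⟩ := Finite.exists_min g
    exact ⟨g j₀, hg j₀, hj₀⟩

theorem sub_ofReal_re_comp (x : ι → ℂ) :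
    x - (fun j => ((x j).re : ℂ)) = I • fun j => ((x j).im : ℂ) := by
  funext j
  simp [mul_comm I, sub_eq_iff_eq_add', re_add_im]

variable [Fintype ι]

theorem norm_ofReal_comp_le_sum {v : ι → ℝ} (hv : ∀ j, 0 ≤ v j) :
    ‖fun j => (v j : ℂ)‖ ≤ ∑ j, v j :=
  (pi_norm_le_iff_of_nonneg (Finset.sum_nonneg fun j _ => hv j)).mpr fun j => by
    simpa [abs_of_nonneg (hv j)] using Finset.single_le_sum (fun i _ => hv i) (Finset.mem_univ j)

theorem norm_ofReal_re_comp_le (x : ι → ℂ) : ‖fun j => ((x j).re : ℂ)‖ ≤ ‖x‖ :=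
  (pi_norm_le_iff_of_nonneg (norm_nonneg x)).mpr fun j => by
    simpa using (abs_re_le_norm (x j)).trans (norm_le_pi_norm x j)

theorem ContinuousLinearMap.re_apply_ofReal_comp [DecidableEq ι] (L : (ι → ℂ) →L[ℂ] ℂ)
    (v : ι → ℝ) : (L fun j => (v j : ℂ)).re = ∑ j, v j * (L (Pi.single j 1)).re := by
  conv_lhs => rw [← Finset.univ_sum_single (fun j => (v j : ℂ))]
  rw [map_sum, re_sum]
  refine Finset.sum_congr rfl fun j _ => ?_
  rw [← mul_one (v j : ℂ), ← smul_eq_mul, Pi.single_smul', map_smul, smul_eq_mul, re_ofReal_mul]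

theorem HasStrictFDerivAt.exists_forall_im_re_add_le_im [DecidableEq ι] {φ : (ι → ℂ) → ℂ}
    {L : (ι → ℂ) →L[ℂ] ℂ} (hφ : HasStrictFDerivAt φ L 0)
    (hL : ∀ j, 0 < (L (Pi.single j 1)).re) :
    ∃ c > 0, ∃ r > 0, ∀ x : ι → ℂ, ‖x‖ < r → (∀ j, 0 ≤ (x j).im) →
      (φ fun j => ((x j).re : ℂ)).im + c * ∑ j, (x j).im ≤ (φ x).im := by
  obtain ⟨a, ha, haL⟩ := exists_pos_forall_le_of_forall_pos hL
  obtain ⟨s, hs, hφs⟩ := hφ.approximates_deriv_on_nhds (c := ⟨a / 2, by positivity⟩)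
    (Or.inr (NNReal.coe_pos.mp (half_pos ha)))
  obtain ⟨r, hr, hrs⟩ := Metric.mem_nhds_iff.mp hs
  refine ⟨a / 2, by positivity, r, hr, fun x hx him => ?_⟩
  set u : ι → ℂ := fun j => ((x j).re : ℂ)
  have hxu : x - u = I • fun j => ((x j).im : ℂ) := sub_ofReal_re_comp x
  -- `Im L(i v) = Re L v ≥ a ∑ vⱼ`; the strict-derivative remainder costs at most `(a / 2) ‖v‖`.
  have hlin : a * ∑ j, (x j).im ≤ (L (x - u)).im := by
    rw [hxu, map_smul, smul_eq_mul, I_mul_im, L.re_apply_ofReal_comp, Finset.mul_sum]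
    exact Finset.sum_le_sum fun j _ => by nlinarith [haL j, him j]
  have hmem : ∀ y : ι → ℂ, ‖y‖ < r → y ∈ s := fun y hy => hrs (mem_ball_zero_iff.mpr hy)
  have hrem : ‖φ x - φ u - L (x - u)‖ ≤ a / 2 * ∑ j, (x j).im := calc
    _ ≤ a / 2 * ‖x - u‖ := hφs x (hmem x hx) u (hmem u ((norm_ofReal_re_comp_le x).trans_lt hx))
    _ ≤ a / 2 * ∑ j, (x j).im := by
      rw [hxu, norm_smul, norm_I, one_mul]
      gcongr
      exact norm_ofReal_comp_le_sum him
  have := (abs_le.mp ((abs_im_le_norm _).trans hrem)).1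
  simp only [sub_im] at this
  linarith

theorem HasStrictFDerivAt.exists_forall_norm_sub_re_le {F : Type*} [NormedAddCommGroup F]
    [NormedSpace ℂ F] {f : (ι → ℂ) → F} {L : (ι → ℂ) →L[ℂ] F} (hf : HasStrictFDerivAt f L 0) :
    ∃ K : NNReal, ∃ r > 0, ∀ x : ι → ℂ, ‖x‖ < r → (∀ j, 0 ≤ (x j).im) →
      ‖f x - f fun j => ((x j).re : ℂ)‖ ≤ K * ∑ j, (x j).im := by
  obtain ⟨K, s, hs, hK⟩ := hf.exists_lipschitzOnWith
  obtain ⟨r, hr, hrs⟩ := Metric.mem_nhds_iff.mp hs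
  refine ⟨K, r, hr, fun x hx him => ?_⟩
  have hmem : ∀ y : ι → ℂ, ‖y‖ < r → y ∈ s := fun y hy => hrs (mem_ball_zero_iff.mpr hy)
  calc _ ≤ K * ‖x - fun j => ((x j).re : ℂ)‖ :=
        hK.norm_sub_le (hmem x hx) (hmem _ ((norm_ofReal_re_comp_le x).trans_lt hx))
    _ ≤ K * ∑ j, (x j).im := by
      rw [sub_ofReal_re_comp, norm_smul, norm_I, one_mul]
      gcongr
      exact norm_ofReal_comp_le_sum him

end

theorem mul_add_mul_le_add_div_mul_add_mul {B S C K c : ℝ} (hB : 0 ≤ B) (hS : 0 ≤ S) (hC : 0 ≤ C)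
    (hK : 0 ≤ K) (hc : 0 < c) : C * B + K * S ≤ (C + K / c) * (B + c * S) := by
  have hKS : K / c * (c * S) = K * S := by field_simp
  nlinarith [mul_nonneg hC (mul_nonneg hc.le hS), mul_nonneg (div_nonneg hK hc.le) hB]

theorem stmt_8_general (d : ℕ) (φ f : (Fin d → ℂ) → ℂ)
    (hφ : AnalyticAt ℂ φ 0)
    (hgrad : ∀ j : Fin d, (fderiv ℂ φ 0 (Pi.single j 1)).im = 0 ∧
      0 < (fderiv ℂ φ 0 (Pi.single j 1)).re)
    (hf : AnalyticAt ℂ f 0)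
    (hbd : ∃ C > 0, ∃ ε > 0, ∀ u : Fin d → ℝ, (∀ j, |u j| < ε) →
      ‖f (fun j => (u j : ℂ))‖ ≤ C * (φ (fun j => (u j : ℂ))).im) :
    ∃ C' > 0, ∃ ε > 0, ∀ (x : Fin d → ℂ) (z : ℂ),
      (∀ j, 0 < (x j).im) → 0 < z.im → (∀ j, ‖x j‖ < ε) → ‖z‖ < ε →
      ‖f x‖ ≤ C' * ‖z + φ x‖ := by
  obtain ⟨C, hC, ε₀, hε₀, hfB⟩ := hbd
  obtain ⟨c, hc, r₁, hr₁, hφx⟩ :=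
    hφ.hasStrictFDerivAt.exists_forall_im_re_add_le_im fun j => (hgrad j).2
  obtain ⟨K, r₂, hr₂, hfx⟩ := hf.hasStrictFDerivAt.exists_forall_norm_sub_re_le
  refine ⟨C + K / c, by positivity, min ε₀ (min r₁ r₂), by positivity,
    fun x z hx hz hxε _ => ?_⟩
  have hxr : ‖x‖ < min r₁ r₂ := (pi_norm_lt_iff (by positivity)).mpr fun j =>
    (hxε j).trans_le (min_le_right _ _)
  have hfu := hfB (fun j => (x j).re) fun j =>
    (abs_re_le_norm (x j)).trans_lt ((hxε j).trans_le (min_le_left _ _))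
  have hB : 0 ≤ (φ fun j => ((x j).re : ℂ)).im :=
    nonneg_of_mul_nonneg_right ((norm_nonneg _).trans hfu) hC
  have hS : 0 ≤ ∑ j, (x j).im := Finset.sum_nonneg fun j _ => (hx j).le
  calc ‖f x‖ ≤ ‖f fun j => ((x j).re : ℂ)‖ + ‖f x - f fun j => ((x j).re : ℂ)‖ :=
        norm_le_norm_add_norm_sub' _ _
    _ ≤ C * (φ fun j => ((x j).re : ℂ)).im + K * ∑ j, (x j).im :=
        add_le_add hfu (hfx x (hxr.trans_le (min_le_right _ _)) fun j => (hx j).le)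
    _ ≤ (C + K / c) * ((φ fun j => ((x j).re : ℂ)).im + c * ∑ j, (x j).im) :=
        mul_add_mul_le_add_div_mul_add_mul hB hS hC.le K.coe_nonneg hc
    _ ≤ (C + K / c) * (z + φ x).im := by
        gcongr
        rw [add_im]
        linarith [hφx x (hxr.trans_le (min_le_left _ _)) fun j => (hx j).le]
    _ ≤ (C + K / c) * ‖z + φ x‖ := by gcongr; exact im_le_norm _

/-- With `φ` analytic at `0`, `φ 0 = 0`, `∇φ(0) ∈ (0,∞)^d`, `Im φ ≥ 0` on
`ℝ^d` near `0`: if `f` is analytic at `0` and `|f(u)| ≤ C·B(u)` for real `u`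
near `0` (where `B(u) = Im φ(u)`), then `f(x)/(z+φ(x))` is bounded on
`ℍ^{d+1}` intersected with a small polydisk about the origin. -/
theorem stmt_8 (d : ℕ) (φ f : (Fin d → ℂ) → ℂ)
    (hφ : AnalyticAt ℂ φ 0) (h0 : φ 0 = 0)
    (hgrad : ∀ j : Fin d, (fderiv ℂ φ 0 (Pi.single j 1)).im = 0 ∧
      0 < (fderiv ℂ φ 0 (Pi.single j 1)).re)
    (hpos : ∃ ε > 0, ∀ u : Fin d → ℝ, (∀ j, |u j| < ε) →
      0 ≤ (φ (fun j => (u j : ℂ))).im)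
    (hf : AnalyticAt ℂ f 0)
    (hbd : ∃ C > 0, ∃ ε > 0, ∀ u : Fin d → ℝ, (∀ j, |u j| < ε) →
      ‖f (fun j => (u j : ℂ))‖ ≤ C * (φ (fun j => (u j : ℂ))).im) :
    ∃ C' > 0, ∃ ε > 0, ∀ (x : Fin d → ℂ) (z : ℂ),
      (∀ j, 0 < (x j).im) → 0 < z.im → (∀ j, ‖x j‖ < ε) → ‖z‖ < ε →
      ‖f x‖ ≤ C' * ‖z + φ x‖ :=
  stmt_8_general d φ f hφ hgrad hf hbd
end

section
/- The tri-upper-half-plane polynomial p(x,y,z) = x + y + z − 2i(xy + xz + yz) − 3xyz has no zeros in ℍ³, and it factors near the origin as p = u·(z + φ(x,y)) where u(x,y) = 1 − 2i(x+y) − 3xy is nonvanishing at 0 and φ(x,y) = (x + y − 2ixy)/(1 − 2i(x+y) − 3xy). -/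
/-!
The Cayley transform `t ↦ (1 + i t)/(1 - i t)` maps the upper half-plane into the open unit disc,
and substituting it into `3 - z₁ - z₂ - z₃` gives `-2i · p(x,y,z) / ((1 - ix)(1 - iy)(1 - iz))`.
A zero of `p` in `ℍ³` would therefore give three points of the open unit disc summing to `3`,
which the triangle inequality forbids.
-/

open Complex

def triHalfPlanePoly (x y z : ℂ) : ℂ :=
  x + y + z - 2 * I * (x * y + x * z + y * z) - 3 * x * y * z

noncomputable def cayley (t : ℂ) : ℂ := (1 + I * t) / (1 - I * t)

lemma norm_one_add_I_mul_lt {t : ℂ} (ht : 0 < t.im) : ‖1 + I * t‖ < ‖1 - I * t‖ := by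
  have hsq : ‖1 + I * t‖ ^ 2 < ‖1 - I * t‖ ^ 2 := by
    simp only [Complex.sq_norm, normSq_apply, add_re, add_im, sub_re, sub_im, one_re, one_im,
      mul_re, mul_im, I_re, I_im]
    nlinarith
  exact lt_of_pow_lt_pow_left₀ 2 (norm_nonneg _) hsq

lemma one_sub_I_mul_ne_zero {t : ℂ} (ht : 0 < t.im) : 1 - I * t ≠ 0 :=
  norm_pos_iff.mp ((norm_nonneg _).trans_lt (norm_one_add_I_mul_lt ht))

lemma norm_cayley_lt_one {t : ℂ} (ht : 0 < t.im) : ‖cayley t‖ < 1 := by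
  rw [cayley, norm_div, div_lt_one (norm_pos_iff.mpr (one_sub_I_mul_ne_zero ht))]
  exact norm_one_add_I_mul_lt ht

lemma add_add_ne_three_of_norm_lt_one {a b c : ℂ} (ha : ‖a‖ < 1) (hb : ‖b‖ < 1)
    (hc : ‖c‖ < 1) : a + b + c ≠ 3 := by
  intro h
  have hsum : ‖a + b + c‖ < 3 := calc
    ‖a + b + c‖ ≤ ‖a‖ + ‖b‖ + ‖c‖ := norm_add₃_le
    _ < 3 := by linarith
  rw [h] at hsum
  norm_num at hsum

lemma three_sub_cayley_add_add {x y z : ℂ} (hx : 1 - I * x ≠ 0) (hy : 1 - I * y ≠ 0)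
    (hz : 1 - I * z ≠ 0) :
    3 - (cayley x + cayley y + cayley z) =
      -2 * I * triHalfPlanePoly x y z / ((1 - I * x) * (1 - I * y) * (1 - I * z)) := by
  rw [eq_div_iff (by simp [hx, hy, hz]), cayley, cayley, cayley, triHalfPlanePoly]
  field_simp
  linear_combination -6 * I * x * y * z * I_sq

theorem triHalfPlanePoly_ne_zero {x y z : ℂ} (hx : 0 < x.im) (hy : 0 < y.im)
    (hz : 0 < z.im) : triHalfPlanePoly x y z ≠ 0 := by
  intro hp
  have hsum : cayley x + cayley y + cayley z = 3 := by
    have := three_sub_cayley_add_add (one_sub_I_mul_ne_zero hx) (one_sub_I_mul_ne_zero hy)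
      (one_sub_I_mul_ne_zero hz)
    rw [hp, mul_zero, zero_div, sub_eq_zero] at this
    exact this.symm
  exact add_add_ne_three_of_norm_lt_one (norm_cayley_lt_one hx) (norm_cayley_lt_one hy)
    (norm_cayley_lt_one hz) hsum

/-- The polynomial `p(x,y,z) = x+y+z − 2i(xy+xz+yz) − 3xyz` has no zeros in
`ℍ³`, and factors as `p = (1 − 2i(x+y) − 3xy)·(z + (x+y−2ixy)/(1−2i(x+y)−3xy))`
wherever `1 − 2i(x+y) − 3xy ≠ 0`. -/
theorem stmt_10 :
    (∀ x y z : ℂ, 0 < x.im → 0 < y.im → 0 < z.im →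
      x + y + z - 2 * I * (x * y + x * z + y * z) - 3 * x * y * z ≠ 0) ∧
    ((1 : ℂ) - 2 * I * ((0:ℂ) + 0) - 3 * 0 * 0 ≠ 0) ∧
    (∀ x y z : ℂ, 1 - 2 * I * (x + y) - 3 * x * y ≠ 0 →
      x + y + z - 2 * I * (x * y + x * z + y * z) - 3 * x * y * z =
        (1 - 2 * I * (x + y) - 3 * x * y) *
          (z + (x + y - 2 * I * x * y) / (1 - 2 * I * (x + y) - 3 * x * y))) := by
  refine ⟨fun x y z hx hy hz => triHalfPlanePoly_ne_zero hx hy hz, by norm_num, ?_⟩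
  intro x y z hu
  rw [mul_add _ z, mul_div_cancel₀ _ hu]
  ring
end

section
/- Let G(u,v) = u² + u²v² + v⁴. There is no constant C and neighborhood of (0,0) on which |uv| ≤ C·G(u,v) holds; likewise v², v³, u, v, and constants are not bounded by C·G near (0,0). Consequently, a polynomial q(u,v) = a + bu + cv + duv + ev² + gv³ satisfying |q(u,v)| ≤ C·G(u,v) near (0,0) must have a = b = c = d = e = g = 0. -/
open Filter Topology Polynomial

/-
Restricting the bound `|q| ≤ C·G` to the curves `v = 0`, `u = 0` and `u = v²` gives one-variable
polynomials in `t` bounded by `K·t²`, `K·t⁴`, `K·t⁴` as `t → 0⁺`, because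
`G(t, 0) = t²`, `G(0, t) = t⁴` and `G(t², t) = 2t⁴ + t⁶`. A polynomial bounded by `K·tⁿ` near `0⁺`
has its first `n` coefficients equal to zero, which kills `a, b` (first curve), `a, c, e, g`
(second curve) and `d + g` (third curve). Each of `uv, v², v³, u, v, 1` is such a `q` with a
nonzero coefficient, so none of them is bounded by `C·G`.
-/

theorem Polynomial.coeff_eq_zero_of_norm_eval_le {𝕜 : Type*} [RCLike 𝕜] {p : 𝕜[X]} {K : ℝ}
    {n : ℕ} (h : ∀ᶠ t : ℝ in 𝓝[>] 0, ‖p.eval (t : 𝕜)‖ ≤ K * t ^ n) {k : ℕ} (hk : k < n) :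
    p.coeff k = 0 := by
  induction n generalizing p k with
  | zero => exact absurd hk k.not_lt_zero
  | succ n ih =>
    have hcoeff0 : p.coeff 0 = 0 := by
      have heval : Tendsto (fun t : ℝ => ‖p.eval (t : 𝕜)‖) (𝓝[>] 0) (𝓝 ‖p.coeff 0‖) :=
        tendsto_nhdsWithin_of_tendsto_nhds <| Continuous.tendsto' (by fun_prop) _ _
          (by simp [coeff_zero_eq_eval_zero])
      have hbound : Tendsto (fun t : ℝ => K * t ^ (n + 1)) (𝓝[>] 0) (𝓝 0) :=
        tendsto_nhdsWithin_of_tendsto_nhds <| Continuous.tendsto' (by fun_prop) _ _ (by simp)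
      exact norm_le_zero_iff.mp (le_of_tendsto_of_tendsto heval hbound h)
    have hdivX : ∀ᶠ t : ℝ in 𝓝[>] 0, ‖p.divX.eval (t : 𝕜)‖ ≤ K * t ^ n := by
      filter_upwards [h, self_mem_nhdsWithin] with t ht (ht0 : 0 < t)
      have hp : p = X * p.divX := by simpa [hcoeff0] using (X_mul_divX_add p).symm
      rw [hp, eval_mul, eval_X, norm_mul, RCLike.norm_ofReal, abs_of_pos ht0, pow_succ] at ht
      nlinarith
    rcases k with _ | k
    · exact hcoeff0
    · simpa [coeff_divX] using ih hdivX (Nat.succ_lt_succ_iff.mp hk)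

theorem coeffs_eq_zero_of_norm_le_mul_quartic (a b c d e g : ℂ)
    (h : ∃ C : ℝ, ∃ ε > 0, ∀ u v : ℝ, |u| < ε → |v| < ε →
      ‖a + b * u + c * v + d * (u * v) + e * v ^ 2 + g * v ^ 3‖ ≤
        C * (u ^ 2 + u ^ 2 * v ^ 2 + v ^ 4)) :
    a = 0 ∧ b = 0 ∧ c = 0 ∧ d = 0 ∧ e = 0 ∧ g = 0 := by
  obtain ⟨K, ε, hε, h⟩ := h
  have hsmall : ∀ᶠ t : ℝ in 𝓝[>] 0, 0 < t ∧ t < ε ∧ t < 1 := by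
    filter_upwards [Ioo_mem_nhdsGT (lt_min hε one_pos)] with t ⟨ht0, ht⟩
    exact ⟨ht0, ht.trans_le (min_le_left _ _), ht.trans_le (min_le_right _ _)⟩
  have hu_axis : ∀ᶠ t : ℝ in 𝓝[>] 0, ‖(C a + C b * X).eval (t : ℂ)‖ ≤ K * t ^ 2 := by
    filter_upwards [hsmall] with t ⟨ht0, htε, _⟩
    simpa using h t 0 (by rwa [abs_of_pos ht0]) (by simpa using hε)
  have hv_axis : ∀ᶠ t : ℝ in 𝓝[>] 0,
      ‖(C a + C c * X + C e * X ^ 2 + C g * X ^ 3).eval (t : ℂ)‖ ≤ K * t ^ 4 := by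
    filter_upwards [hsmall] with t ⟨ht0, htε, _⟩
    simpa using h 0 t (by simpa using hε) (by rwa [abs_of_pos ht0])
  have hparabola : ∀ᶠ t : ℝ in 𝓝[>] 0,
      ‖(C a + C c * X + C (b + e) * X ^ 2 + C (d + g) * X ^ 3).eval (t : ℂ)‖ ≤
        (3 * |K|) * t ^ 4 := by
    filter_upwards [hsmall] with t ⟨ht0, htε, ht1⟩
    have ht2 : |t ^ 2| < ε := by rw [abs_of_pos (by positivity)]; nlinarith
    have hG : (t ^ 2) ^ 2 + (t ^ 2) ^ 2 * t ^ 2 + t ^ 4 ≤ 3 * t ^ 4 := by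
      have : t ^ 6 ≤ t ^ 4 := pow_le_pow_of_le_one ht0.le ht1.le (by norm_num)
      linarith
    calc _ = ‖a + b * ↑(t ^ 2) + c * t + d * (↑(t ^ 2) * t) + e * t ^ 2 + g * t ^ 3‖ := by
          congr 1; simp; ring
      _ ≤ K * ((t ^ 2) ^ 2 + (t ^ 2) ^ 2 * t ^ 2 + t ^ 4) := h _ _ ht2 (by rwa [abs_of_pos ht0])
      _ ≤ |K| * (3 * t ^ 4) :=
          mul_le_mul (le_abs_self K) hG (by positivity) (abs_nonneg K)
      _ = _ := by ring
  have ha := coeff_eq_zero_of_norm_eval_le hv_axis (k := 0) (by norm_num)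
  have hb := coeff_eq_zero_of_norm_eval_le hu_axis (k := 1) (by norm_num)
  have hc := coeff_eq_zero_of_norm_eval_le hv_axis (k := 1) (by norm_num)
  have he := coeff_eq_zero_of_norm_eval_le hv_axis (k := 2) (by norm_num)
  have hg := coeff_eq_zero_of_norm_eval_le hv_axis (k := 3) (by norm_num)
  have hdg := coeff_eq_zero_of_norm_eval_le hparabola (k := 3) (by norm_num)
  simp [coeff_X, coeff_C, coeff_mul_X_pow'] at ha hb hc he hg hdg
  exact ⟨ha, hb, hc, by simpa [hg] using hdg, he, hg⟩

/-- For `G(u,v) = u² + u²v² + v⁴`: none of the functions `uv`, `v²`, `v³`,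
`u`, `v`, `1` is bounded by `C·G` on any neighborhood of `(0,0)`; consequently
a polynomial `q(u,v) = a + bu + cv + duv + ev² + gv³` satisfying
`|q| ≤ C·G` near `(0,0)` must have all coefficients zero. -/
theorem stmt_14 :
    (¬ ∃ C : ℝ, ∃ ε > 0, ∀ u v : ℝ, |u| < ε → |v| < ε →
        |u * v| ≤ C * (u ^ 2 + u ^ 2 * v ^ 2 + v ^ 4)) ∧
    (¬ ∃ C : ℝ, ∃ ε > 0, ∀ u v : ℝ, |u| < ε → |v| < ε →
        |v ^ 2| ≤ C * (u ^ 2 + u ^ 2 * v ^ 2 + v ^ 4)) ∧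
    (¬ ∃ C : ℝ, ∃ ε > 0, ∀ u v : ℝ, |u| < ε → |v| < ε →
        |v ^ 3| ≤ C * (u ^ 2 + u ^ 2 * v ^ 2 + v ^ 4)) ∧
    (¬ ∃ C : ℝ, ∃ ε > 0, ∀ u v : ℝ, |u| < ε → |v| < ε →
        |u| ≤ C * (u ^ 2 + u ^ 2 * v ^ 2 + v ^ 4)) ∧
    (¬ ∃ C : ℝ, ∃ ε > 0, ∀ u v : ℝ, |u| < ε → |v| < ε →
        |v| ≤ C * (u ^ 2 + u ^ 2 * v ^ 2 + v ^ 4)) ∧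
    (¬ ∃ C : ℝ, ∃ ε > 0, ∀ u v : ℝ, |u| < ε → |v| < ε →
        (1 : ℝ) ≤ C * (u ^ 2 + u ^ 2 * v ^ 2 + v ^ 4)) ∧
    (∀ a b c d e g : ℂ,
      (∃ C : ℝ, ∃ ε > 0, ∀ u v : ℝ, |u| < ε → |v| < ε →
        ‖a + b * u + c * v + d * (u * v) + e * v ^ 2 + g * v ^ 3‖ ≤
          C * (u ^ 2 + u ^ 2 * v ^ 2 + v ^ 4)) →
      a = 0 ∧ b = 0 ∧ c = 0 ∧ d = 0 ∧ e = 0 ∧ g = 0) := by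
  refine ⟨?_, ?_, ?_, ?_, ?_, ?_, coeffs_eq_zero_of_norm_le_mul_quartic⟩ <;>
    rintro ⟨K, ε, hε, h⟩
  · simpa using (coeffs_eq_zero_of_norm_le_mul_quartic 0 0 0 1 0 0
      ⟨K, ε, hε, fun u v hu hv => by simpa using h u v hu hv⟩).2.2.2.1
  · simpa using (coeffs_eq_zero_of_norm_le_mul_quartic 0 0 0 0 1 0
      ⟨K, ε, hε, fun u v hu hv => by simpa using h u v hu hv⟩).2.2.2.2.1
  · simpa using (coeffs_eq_zero_of_norm_le_mul_quartic 0 0 0 0 0 1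
      ⟨K, ε, hε, fun u v hu hv => by simpa using h u v hu hv⟩).2.2.2.2.2
  · simpa using (coeffs_eq_zero_of_norm_le_mul_quartic 0 1 0 0 0 0
      ⟨K, ε, hε, fun u v hu hv => by simpa using h u v hu hv⟩).2.1
  · simpa using (coeffs_eq_zero_of_norm_le_mul_quartic 0 0 1 0 0 0
      ⟨K, ε, hε, fun u v hu hv => by simpa using h u v hu hv⟩).2.2.1
  · simpa using (coeffs_eq_zero_of_norm_le_mul_quartic 1 0 0 0 0 0
      ⟨K, ε, hε, fun u v hu hv => by simpa using h u v hu hv⟩).1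
end
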